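/- Let 𝒮' be a finite collection of bitiles that is a union of trees, and suppose the collection has the property that for every P ∈ 𝒮' there is no tree T in the family with I_P ⊊ I_T and ξ_T ∈ ω_{P,2}, where each P ∈ 𝒮' belongs to some 1-tree T (meaning I_P ⊆ I_T and ξ_T ∈ ω_{P,1}). Then the upper tiles {P_2 : P ∈ 𝒮'} are pairwise disjoint: for distinct P, P' ∈ 𝒮', (I_P × ω_{P,2}) ∩ (I_{P'} × ω_{P',2}) = ∅. -/
import Mathlib


/-- A bitile `[2^i n, 2^i(n+1)) × [2^{-i+1} l, 2^{-i+1}(l+1))`: a product of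
dyadic intervals of area two (with frequency interval in `ℝ₊`). -/
structure Bitile where
  i : ℤ
  n : ℤ
  l : ℕ

/-- The time interval `I_P` of a bitile. -/
def Bitile.timeI (P : Bitile) : Set ℝ :=
  Set.Ico ((2 : ℝ) ^ P.i * P.n) ((2 : ℝ) ^ P.i * (P.n + 1))

/-- The frequency interval `ω_P` of a bitile. -/
def Bitile.freqI (P : Bitile) : Set ℝ :=
  Set.Ico ((2 : ℝ) ^ (1 - P.i) * P.l) ((2 : ℝ) ^ (1 - P.i) * (P.l + 1))

/-- The lower half `ω_{P,1}` of the frequency interval of a bitile. -/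
def Bitile.freq1 (P : Bitile) : Set ℝ :=
  Set.Ico ((2 : ℝ) ^ (-P.i) * (2 * P.l)) ((2 : ℝ) ^ (-P.i) * (2 * P.l + 1))

/-- The upper half `ω_{P,2}` of the frequency interval of a bitile. -/
def Bitile.freq2 (P : Bitile) : Set ℝ :=
  Set.Ico ((2 : ℝ) ^ (-P.i) * (2 * P.l + 1)) ((2 : ℝ) ^ (-P.i) * (2 * P.l + 2))

/-- If two dyadic intervals meet and the first has the smaller scale, the first
is contained in the second. -/
lemma dyadic_subset {a b m k : ℤ} (hab : a ≤ b)
    (h : (Set.Ico ((2:ℝ)^a * m) ((2:ℝ)^a * (m+1)) ∩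
          Set.Ico ((2:ℝ)^b * k) ((2:ℝ)^b * (k+1))).Nonempty) :
    Set.Ico ((2:ℝ)^a * m) ((2:ℝ)^a * (m+1)) ⊆ Set.Ico ((2:ℝ)^b * k) ((2:ℝ)^b * (k+1)) := by
  obtain ⟨x, ⟨hx1, hx2⟩, hx3, hx4⟩ := h
  have hpa : (0:ℝ) < 2^a := by positivity
  set D : ℤ := 2 ^ (b - a).toNat with hD
  have hDpos : 0 < D := by positivity
  have h2b : (2:ℝ)^b = 2^a * (D : ℝ) := by
    rw [hD]
    push_cast
    rw [← zpow_natCast (2:ℝ) (b - a).toNat, Int.toNat_of_nonneg (by omega : (0:ℤ) ≤ b - a),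
      ← zpow_add₀ (by norm_num : (2:ℝ) ≠ 0)]
    ring_nf
  rw [h2b] at hx3 hx4 ⊢
  -- integer inequalities
  have h1 : (m : ℝ) < D * k + D := by
    have : (2:ℝ)^a * m < 2^a * (D : ℝ) * (k + 1) := lt_of_le_of_lt hx1 hx4
    rw [mul_assoc] at this
    have := (mul_lt_mul_iff_right₀ hpa).mp this
    nlinarith
  have h2 : ((D : ℝ)) * k < m + 1 := by
    have : (2:ℝ)^a * (D : ℝ) * k < 2^a * (m + 1) := lt_of_le_of_lt hx3 hx2
    rw [mul_assoc] at this
    exact (mul_lt_mul_iff_right₀ hpa).mp this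
  have h1' : m + 1 ≤ D * k + D := by exact_mod_cast Int.lt_iff_add_one_le.mp (by exact_mod_cast h1)
  have h2' : D * k ≤ m := by
    have : D * k < m + 1 := by exact_mod_cast h2
    omega
  apply Set.Ico_subset_Ico
  · rw [mul_assoc]
    apply mul_le_mul_of_nonneg_left _ hpa.le
    exact_mod_cast h2'
  · rw [mul_assoc]
    apply mul_le_mul_of_nonneg_left _ hpa.le
    push_cast
    have : ((m : ℝ) + 1) ≤ D * k + D := by exact_mod_cast h1'
    nlinarith
    
/-- Two dyadic intervals at the same scale that meet are identical. -/
lemma dyadic_eq {a m k : ℤ}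
    (h : (Set.Ico ((2:ℝ)^a * m) ((2:ℝ)^a * (m+1)) ∩
          Set.Ico ((2:ℝ)^a * k) ((2:ℝ)^a * (k+1))).Nonempty) : m = k := by
  obtain ⟨x, ⟨hx1, hx2⟩, hx3, hx4⟩ := h
  have hpa : (0:ℝ) < 2^a := by positivity
  have h1 : (m : ℝ) < k + 1 := by
    have := lt_of_le_of_lt hx1 hx4
    exact (mul_lt_mul_iff_right₀ hpa).mp this
  have h2 : (k : ℝ) < m + 1 := by
    have := lt_of_le_of_lt hx3 hx2
    exact (mul_lt_mul_iff_right₀ hpa).mp this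
  have h1' : m < k + 1 := by exact_mod_cast h1
  have h2' : k < m + 1 := by exact_mod_cast h2
  omega

lemma timeI_eq (P : Bitile) :
    P.timeI = Set.Ico ((2:ℝ)^P.i * (P.n : ℝ)) ((2:ℝ)^P.i * ((P.n : ℝ)+1)) := rfl

lemma freq2_eq (P : Bitile) :
    P.freq2 = Set.Ico ((2:ℝ)^(-P.i) * ((2 * (P.l : ℤ) + 1 : ℤ) : ℝ))
      ((2:ℝ)^(-P.i) * (((2 * (P.l : ℤ) + 1 : ℤ) : ℝ) + 1)) := by
  unfold Bitile.freq2
  push_cast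
  ring_nf

lemma freqI_eq (P : Bitile) :
    P.freqI = Set.Ico ((2:ℝ)^(1 - P.i) * (((P.l : ℤ)) : ℝ))
      ((2:ℝ)^(1 - P.i) * ((((P.l : ℤ)) : ℝ) + 1)) := by
  unfold Bitile.freqI
  push_cast
  ring_nf

lemma two_zpow_sub (i : ℤ) : (2:ℝ)^(1 - i) = 2 * (2:ℝ)^(-i) := by
  rw [sub_eq_add_neg, zpow_add₀ (by norm_num : (2:ℝ) ≠ 0)]
  norm_num

lemma freq1_subset_freqI (P : Bitile) : P.freq1 ⊆ P.freqI := by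
  unfold Bitile.freq1 Bitile.freqI
  rw [two_zpow_sub]
  apply Set.Ico_subset_Ico
  · ring_nf; rfl
  · have : (0:ℝ) < (2:ℝ)^(-P.i) := by positivity
    nlinarith

lemma freq2_subset_freqI (P : Bitile) : P.freq2 ⊆ P.freqI := by
  unfold Bitile.freq2 Bitile.freqI
  rw [two_zpow_sub]
  apply Set.Ico_subset_Ico
  · have : (0:ℝ) < (2:ℝ)^(-P.i) := by positivity
    nlinarith
  · ring_nf; rfl

/-- Key lemma: if the upper tiles of `P, P'` meet and `P.i ≤ P'.i`, then `P = P'`. -/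
lemma key {ι : Type*}
    (Itop : ι → Set ℝ) (ξtop : ι → ℝ)
    (S : Finset Bitile)
    (htree : ∀ P ∈ S, ∃ t : ι, P.timeI ⊆ Itop t ∧ ξtop t ∈ P.freq1)
    (hno : ∀ P ∈ S, ∀ t : ι, ¬(P.timeI ⊂ Itop t ∧ ξtop t ∈ P.freq2))
    {P P' : Bitile} (hP : P ∈ S) (hP' : P' ∈ S) (hi : P.i ≤ P'.i)
    {x y : ℝ} (hx1 : x ∈ P.timeI) (hx2 : x ∈ P'.timeI)
    (hy1 : y ∈ P.freq2) (hy2 : y ∈ P'.freq2) : P = P' := by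
  rcases eq_or_lt_of_le hi with heq | hlt
  · -- same scale : equal bitiles
    have hn : P.n = P'.n := by
      apply dyadic_eq (a := P.i)
      rw [timeI_eq] at hx1
      rw [timeI_eq, ← heq] at hx2
      exact ⟨x, hx1, hx2⟩
    have hl : (2 * (P.l : ℤ) + 1) = (2 * (P'.l : ℤ) + 1) := by
      apply dyadic_eq (a := -P.i)
      rw [freq2_eq] at hy1
      rw [freq2_eq, ← heq] at hy2
      exact ⟨y, hy1, hy2⟩
    have hl' : P.l = P'.l := by omega
    cases P; cases P'
    simp_all
  · -- different scales: derive a contradiction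
    exfalso
    -- time intervals nest
    have hsub : P.timeI ⊆ P'.timeI := by
      rw [timeI_eq, timeI_eq]
      apply dyadic_subset hi
      rw [timeI_eq] at hx1; rw [timeI_eq] at hx2
      exact ⟨x, hx1, hx2⟩
    have hne : P.timeI ≠ P'.timeI := by
      intro h
      rw [timeI_eq, timeI_eq] at h
      have hlt1 : (2:ℝ)^P.i * (P.n : ℝ) < (2:ℝ)^P.i * ((P.n : ℝ)+1) := by
        have : (0:ℝ) < (2:ℝ)^P.i := by positivity
        nlinarith
      rw [Set.Ico_eq_Ico_iff (Or.inl hlt1)] at h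
      obtain ⟨h1, h2⟩ := h
      have : (2:ℝ)^P.i = (2:ℝ)^P'.i := by nlinarith
      have := zpow_right_injective₀ (by norm_num : (0:ℝ) < 2) (by norm_num : (2:ℝ) ≠ 1) this
      omega
    have hssub : P.timeI ⊂ P'.timeI := ssubset_of_subset_of_ne hsub hne
    -- the whole frequency interval of P' sits inside ω_{P,2}
    have hfsub : P'.freqI ⊆ P.freq2 := by
      rw [freqI_eq, freq2_eq]
      apply dyadic_subset (by omega : 1 - P'.i ≤ -P.i)
      refine ⟨y, ?_, ?_⟩
      · rw [← freqI_eq]; exact freq2_subset_freqI P' hy2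
      · rw [← freq2_eq]; exact hy1
    obtain ⟨t, ht1, ht2⟩ := htree P' hP'
    exact hno P hP t ⟨lt_of_lt_of_le hssub ht1,
      hfsub (freq1_subset_freqI P' ht2)⟩

/-- For a collection of bitiles which is a union of 1-trees (each `P` belongs to a
tree with top `(I_T, ξ_T)` satisfying `I_P ⊆ I_T` and `ξ_T ∈ ω_{P,1}`), such that
no `P` admits a tree top with `I_P ⊊ I_T` and `ξ_T ∈ ω_{P,2}`, the upper tiles
`P_2 = I_P × ω_{P,2}` are pairwise disjoint. -/
theorem one_trees_upper_tiles_disjoint {ι : Type*}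
    (Itop : ι → Set ℝ) (ξtop : ι → ℝ)
    (hdy : ∀ t, ∃ j m : ℤ, Itop t = Set.Ico ((2 : ℝ) ^ j * m) ((2 : ℝ) ^ j * (m + 1)))
    (S : Finset Bitile)
    (htree : ∀ P ∈ S, ∃ t : ι, P.timeI ⊆ Itop t ∧ ξtop t ∈ P.freq1)
    (hno : ∀ P ∈ S, ∀ t : ι, ¬(P.timeI ⊂ Itop t ∧ ξtop t ∈ P.freq2)) :
    ∀ P ∈ S, ∀ P' ∈ S, P ≠ P' →
      (P.timeI ×ˢ P.freq2) ∩ (P'.timeI ×ˢ P'.freq2) = ∅ := by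
  intro P hP P' hP' hne
  by_contra h
  obtain ⟨⟨x, y⟩, ⟨⟨hx1, hy1⟩, hx2, hy2⟩⟩ := Set.nonempty_iff_ne_empty.mpr h
  rcases le_total P.i P'.i with hi | hi
  · exact hne (key Itop ξtop S htree hno hP hP' hi hx1 hx2 hy1 hy2)
  · exact hne (key Itop ξtop S htree hno hP' hP hi hx2 hx1 hy2 hy1).symm
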